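/- Let A, B ∈ B(H) and let h : [0,∞) → [0,∞) be a nondecreasing convex function. Then h(ω(A*B)) ≤ (1/2)·h(‖A‖·‖B‖) + (1/2)·h(ω(BA*)). -/

import Mathlib

/-!
For a unit vector `x`, polarization gives `4 Re ⟪P x, Q x⟫ ≤ ‖P x + Q x‖² ≤ ‖P + Q‖²`, and the
C*-identity `‖P + Q‖² = ‖(P + Q)(P + Q)*‖` expands this to `‖P‖² + ‖Q‖² + ‖G* + G‖` with
`G = Q P*`. Since `G* + G` is selfadjoint, its norm is its numerical radius, which is at most
`2 ω(G)`. Choosing `P = ‖B‖ A` and `Q = ‖A‖ λ B`, with `λ` rotating `⟪A x, B x⟫` onto the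
positive real axis, gives `2 |⟪A* B x, x⟫| ≤ ‖A‖ ‖B‖ + ω(B A*)`, hence
`ω(A* B) ≤ (‖A‖ ‖B‖ + ω(B A*)) / 2`; monotonicity and convexity of `h` finish the proof.
-/

open ComplexConjugate

variable {H : Type*} [NormedAddCommGroup H] [InnerProductSpace ℂ H] [CompleteSpace H]

/-- The absolute value `|T| = (T*T)^(1/2)` of a bounded operator. -/
noncomputable def absOp (T : H →L[ℂ] H) : H →L[ℂ] H := CFC.sqrt (star T * T)

/-- The numerical radius `ω(T) = sup {|⟨Tx, x⟩| : ‖x‖ = 1}`. -/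
noncomputable def numRad (T : H →L[ℂ] H) : ℝ :=
  sSup {r : ℝ | ∃ x : H, ‖x‖ = 1 ∧ r = ‖(inner ℂ (T x) x : ℂ)‖}

section

omit [CompleteSpace H]

lemma numRad_nonneg (T : H →L[ℂ] H) : 0 ≤ numRad T :=
  Real.sSup_nonneg (by rintro r ⟨x, -, rfl⟩; positivity)

lemma norm_inner_le_numRad (T : H →L[ℂ] H) {x : H} (hx : ‖x‖ = 1) :
    ‖inner ℂ (T x) x‖ ≤ numRad T := by
  refine le_csSup ⟨‖T‖, ?_⟩ ⟨x, hx, rfl⟩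
  rintro r ⟨y, hy, rfl⟩
  simpa [hy] using (norm_inner_le_norm (𝕜 := ℂ) (T y) y).trans
    (mul_le_mul_of_nonneg_right (T.le_opNorm y) (norm_nonneg y))

lemma numRad_le {T : H →L[ℂ] H} {M : ℝ} (hM : 0 ≤ M)
    (hT : ∀ x : H, ‖x‖ = 1 → ‖inner ℂ (T x) x‖ ≤ M) : numRad T ≤ M :=
  Real.sSup_le (by rintro r ⟨x, hx, rfl⟩; exact hT x hx) hM

lemma norm_inner_le_numRad_mul_sq (T : H →L[ℂ] H) (x : H) :
    ‖inner ℂ (T x) x‖ ≤ numRad T * ‖x‖ ^ 2 := by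
  rcases eq_or_ne x 0 with rfl | hx
  · simp
  have hunit := norm_inner_le_numRad T (norm_smul_inv_norm (𝕜 := ℂ) hx)
  rw [map_smul, inner_smul_left, inner_smul_right, norm_mul, norm_mul] at hunit
  have hx' : 0 < ‖x‖ := norm_pos_iff.mpr hx
  simp only [RCLike.norm_conj, norm_inv, RCLike.norm_ofReal, abs_norm] at hunit
  rw [← div_le_iff₀ (by positivity)]
  calc ‖inner ℂ (T x) x‖ / ‖x‖ ^ 2 = ‖x‖⁻¹ * (‖x‖⁻¹ * ‖inner ℂ (T x) x‖) := by field_simp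
    _ ≤ numRad T := hunit

lemma numRad_smul_le (c : ℂ) (T : H →L[ℂ] H) : numRad (c • T) ≤ ‖c‖ * numRad T :=
  numRad_le (by have := numRad_nonneg T; positivity) fun x hx => by
    rw [smul_apply, inner_smul_left, norm_mul, RCLike.norm_conj]
    gcongr
    exact norm_inner_le_numRad T hx

end

lemma inner_star_apply (T : H →L[ℂ] H) (x y : H) : inner ℂ (star T x) y = inner ℂ x (T y) := by
  rw [ContinuousLinearMap.star_eq_adjoint, ContinuousLinearMap.adjoint_inner_left]

lemma norm_star_add_self_le (T : H →L[ℂ] H) : ‖star T + T‖ ≤ 2 * numRad T := by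
  have hsa : IsSelfAdjoint (star T + T) := by
    rw [IsSelfAdjoint, star_add, star_star, add_comm]
  rw [ContinuousLinearMap.norm_eq_iSup_rayleighQuotient _ hsa.isSymmetric]
  refine ciSup_le fun x => ?_
  have hre : RCLike.re (inner ℂ ((star T + T) x) x) = 2 * RCLike.re (inner ℂ (T x) x) := by
    rw [add_apply, inner_add_left, inner_star_apply, ← inner_conj_symm, map_add,
      RCLike.conj_re]
    ring
  rw [ContinuousLinearMap.rayleighQuotient, ContinuousLinearMap.reApplyInnerSelf_apply, hre,
    abs_div, abs_mul, abs_two, abs_sq, mul_div_assoc]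
  gcongr
  exact div_le_of_le_mul₀ (by positivity) (numRad_nonneg T)
    ((RCLike.abs_re_le_norm _).trans (norm_inner_le_numRad_mul_sq T x))

lemma norm_add_sq_le (P Q : H →L[ℂ] H) :
    ‖P + Q‖ ^ 2 ≤ ‖P‖ ^ 2 + ‖Q‖ ^ 2 + 2 * numRad (Q * star P) := by
  have hexpand : (P + Q) * star (P + Q)
      = P * star P + Q * star Q + (star (Q * star P) + Q * star P) := by
    simp only [star_add, star_mul, star_star, add_mul, mul_add]
    abel
  calc ‖P + Q‖ ^ 2 = ‖(P + Q) * star (P + Q)‖ := by rw [CStarRing.norm_self_mul_star, sq]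
    _ ≤ ‖P * star P‖ + ‖Q * star Q‖ + ‖star (Q * star P) + Q * star P‖ := by
      rw [hexpand]; exact norm_add₃_le
    _ ≤ ‖P‖ ^ 2 + ‖Q‖ ^ 2 + 2 * numRad (Q * star P) := by
      rw [CStarRing.norm_self_mul_star, CStarRing.norm_self_mul_star, ← sq, ← sq]
      gcongr
      exact norm_star_add_self_le _

lemma four_mul_re_inner_le (P Q : H →L[ℂ] H) {x : H} (hx : ‖x‖ = 1) :
    4 * RCLike.re (inner ℂ (P x) (Q x)) ≤ ‖P‖ ^ 2 + ‖Q‖ ^ 2 + 2 * numRad (Q * star P) := by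
  have happly : ‖P x + Q x‖ ≤ ‖P + Q‖ := by simpa [hx] using (P + Q).le_opNorm x
  calc 4 * RCLike.re (inner ℂ (P x) (Q x)) = ‖P x + Q x‖ ^ 2 - ‖P x - Q x‖ ^ 2 := by
        rw [re_inner_eq_norm_add_mul_self_sub_norm_sub_mul_self_div_four]; ring
    _ ≤ ‖P + Q‖ ^ 2 := by nlinarith [norm_nonneg (P x + Q x), sq_nonneg ‖P x - Q x‖]
    _ ≤ ‖P‖ ^ 2 + ‖Q‖ ^ 2 + 2 * numRad (Q * star P) := norm_add_sq_le P Q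

lemma two_mul_norm_inner_le (A B : H →L[ℂ] H) {x : H} (hx : ‖x‖ = 1) :
    2 * ‖inner ℂ (B x) (A x)‖ ≤ ‖A‖ * ‖B‖ + numRad (B * star A) := by
  set w : ℂ := inner ℂ (A x) (B x)
  set N : ℝ := ‖A‖ * ‖B‖
  have hω := numRad_nonneg (B * star A)
  rw [norm_inner_symm]
  rcases (by positivity : 0 ≤ N).eq_or_lt with hN | hN
  · have hw : ‖w‖ ≤ N := by
      simpa [hx] using (norm_inner_le_norm (𝕜 := ℂ) (A x) (B x)).trans
        (mul_le_mul (A.le_opNorm x) (B.le_opNorm x) (norm_nonneg _) (by positivity))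
    rw [← hN] at hw ⊢
    linarith
  obtain ⟨l, hl, hlw⟩ : ∃ l : ℂ, ‖l‖ ≤ 1 ∧ l * w = ‖w‖ := by
    refine ⟨conj w / ‖w‖, ?_, ?_⟩
    · rw [norm_div, RCLike.norm_conj, Complex.norm_real, norm_norm]; exact div_self_le_one _
    · rw [div_mul_eq_mul_div, Complex.conj_mul', sq, mul_self_div_self]
  have key := four_mul_re_inner_le ((‖B‖ : ℂ) • A) (((‖A‖ : ℂ) * l) • B) hx
  have hre : RCLike.re (inner ℂ (((‖B‖ : ℂ) • A) x) ((((‖A‖ : ℂ) * l) • B) x)) = N * ‖w‖ := by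
    rw [smul_apply, smul_apply, inner_smul_left, inner_smul_right, Complex.conj_ofReal,
      mul_assoc, hlw, ← Complex.ofReal_mul, ← Complex.ofReal_mul, RCLike.re_to_complex,
      Complex.ofReal_re]
    ring
  have hP : ‖(‖B‖ : ℂ) • A‖ = N := by
    rw [norm_smul, Complex.norm_real, norm_norm, mul_comm]
  have hQ : ‖((‖A‖ : ℂ) * l) • B‖ ≤ N := by
    rw [norm_smul, norm_mul, Complex.norm_real, norm_norm]
    exact mul_le_mul_of_nonneg_right (mul_le_of_le_one_right (norm_nonneg _) hl) (norm_nonneg _)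
  have hG : numRad ((((‖A‖ : ℂ) * l) • B) * star ((‖B‖ : ℂ) • A)) ≤ N * numRad (B * star A) := by
    rw [star_smul, smul_mul_smul_comm, Complex.star_def, Complex.conj_ofReal]
    refine (numRad_smul_le _ _).trans (mul_le_mul_of_nonneg_right ?_ hω)
    rw [norm_mul, norm_mul, Complex.norm_real, Complex.norm_real, norm_norm, norm_norm]
    nlinarith [norm_nonneg A, norm_nonneg B]
  rw [hre, hP] at key
  nlinarith [norm_nonneg (((‖A‖ : ℂ) * l) • B)]

theorem numRad_star_mul_le (A B : H →L[ℂ] H) :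
    numRad (star A * B) ≤ (‖A‖ * ‖B‖ + numRad (B * star A)) / 2 :=
  numRad_le (by have := numRad_nonneg (B * star A); positivity) fun x hx => by
    rw [mul_apply_eq_comp, inner_star_apply]
    linarith [two_mul_norm_inner_le A B hx]

theorem numRad_convex_split_general (A B : H →L[ℂ] H) (h : ℝ → ℝ)
    (hmono : MonotoneOn h (Set.Ici (0 : ℝ))) (hconv : ConvexOn ℝ (Set.Ici (0 : ℝ)) h) :
    h (numRad (star A * B))
      ≤ (1 / 2) * h (‖A‖ * ‖B‖) + (1 / 2) * h (numRad (B * star A)) := by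
  have hp : 0 ≤ ‖A‖ * ‖B‖ := by positivity
  have hq := numRad_nonneg (B * star A)
  calc h (numRad (star A * B))
        ≤ h ((1 / 2 : ℝ) • (‖A‖ * ‖B‖) + (1 / 2 : ℝ) • numRad (B * star A)) := by
        refine hmono (numRad_nonneg _) (by simp only [Set.mem_Ici]; positivity) ?_
        simpa only [smul_eq_mul, ← add_div, one_div_mul_eq_div] using numRad_star_mul_le A B
    _ ≤ (1 / 2) * h (‖A‖ * ‖B‖) + (1 / 2) * h (numRad (B * star A)) :=
        hconv.2 hp hq (by norm_num) (by norm_num) (by norm_num)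

/-- Inequality (2.8): for a nondecreasing convex `h : [0,∞) → [0,∞)`,
`h(ω(A*B)) ≤ (1/2) h(‖A‖‖B‖) + (1/2) h(ω(BA*))`. -/
theorem numRad_convex_split (A B : H →L[ℂ] H) (h : ℝ → ℝ)
    (hmono : MonotoneOn h (Set.Ici (0 : ℝ))) (hconv : ConvexOn ℝ (Set.Ici (0 : ℝ)) h)
    (hnn : ∀ t : ℝ, 0 ≤ t → 0 ≤ h t) :
    h (numRad (star A * B))
      ≤ (1 / 2) * h (‖A‖ * ‖B‖) + (1 / 2) * h (numRad (B * star A)) :=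
  numRad_convex_split_general A B h hmono hconv
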